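/- Let p, q, l ∈ ℕ^n be multi-indices with supp q ∩ supp l = ∅ and |q| + |l| ≤ m (where |q| = Σ_k q_k), and let M(v) = ∏_k |v_k|^{2p_k} · ∏_k v_k^{q_k} · ∏_k (conj v_k)^{l_k} for v ∈ ℂ^n. Then for every v ∈ ℂ^n, ∫_{[0,2π]^{n−r}} M(Ψ_{Σθ_jη^j} v) ∏_{j=r+1}^n dθ_j/(2π) equals M(v) if (q − l)·W = 0 and equals 0 if (q − l)·W ≠ 0. -/

import Mathlib

/-!
Since `det R = ±1`, the vectors `η^j` are the rows of `R⁻¹`, an integer matrix. The rotation `Ψ_α`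
multiplies `M(v)` by the phase `exp(i α·(q - l))`, and for `α = Σθ_jη^j` this phase is
`exp(i Σ_j x_j θ_j)` with `x = R⁻¹(q - l) ∈ ℤⁿ`. Averaging over the torus therefore gives `M(v)` if
`x_j = 0` for all `j ≥ r` and `0` otherwise. Finally `x_j = 0` for `j ≥ r` says that `q - l` lies in
the span of `ζ¹, …, ζ^r`, that is in `𝒜^R`; since `|q - l|₁ = |q| + |l| ≤ m`, this happens exactly
when `(q - l)·W = 0`.
-/

open scoped BigOperators Classical Matrix
open MeasureTheory

theorem setIntegral_univ_pi_prod {ι : Type*} [Fintype ι] (s : Set ℝ) (f : ι → ℝ → ℂ) :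
    ∫ θ : ι → ℝ in Set.univ.pi (fun _ => s), ∏ j, f j (θ j) = ∏ j, ∫ t in s, f j t := by
  rw [volume_pi, Measure.restrict_pi_pi, integral_fintype_prod_eq_prod]

theorem integral_Icc_exp_int_mul_I (c : ℤ) :
    ∫ t in Set.Icc (0:ℝ) (2 * Real.pi), Complex.exp (c * Complex.I * t) =
      if c = 0 then ((2 * Real.pi : ℝ) : ℂ) else 0 := by
  rw [integral_Icc_eq_integral_Ioc, ← intervalIntegral.integral_of_le (by positivity)]
  split_ifs with hc
  · simp [hc]
  · have hne : (c : ℂ) * Complex.I ≠ 0 := by simp [hc]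
    have hper : Complex.exp (c * Complex.I * ((2 * Real.pi : ℝ) : ℂ)) = 1 := by
      rw [← Complex.exp_int_mul_two_pi_mul_I c]; push_cast; ring_nf
    rw [integral_exp_mul_complex hne, hper]
    simp

theorem setIntegral_cube_exp_I_mul_sum {ι : Type*} [Fintype ι] (c : ι → ℤ) :
    ∫ θ : ι → ℝ in Set.univ.pi (fun _ => Set.Icc (0:ℝ) (2 * Real.pi)),
      Complex.exp (Complex.I * ((∑ j, c j * θ j : ℝ) : ℂ)) =
    if ∀ j, c j = 0 then ((2 * Real.pi : ℝ) : ℂ) ^ Fintype.card ι else 0 := by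
  have hprod : ∀ θ : ι → ℝ, Complex.exp (Complex.I * ((∑ j, c j * θ j : ℝ) : ℂ)) =
      ∏ j, Complex.exp (c j * Complex.I * θ j) := by
    intro θ
    rw [← Complex.exp_sum, Complex.ofReal_sum, Finset.mul_sum]
    push_cast
    ring_nf
  simp_rw [hprod]
  rw [setIntegral_univ_pi_prod _ fun j t => Complex.exp (c j * Complex.I * t)]
  simp_rw [integral_Icc_exp_int_mul_I]
  split_ifs with h
  · simp [h, Finset.card_univ]
  · obtain ⟨j, hj⟩ := not_forall.mp h
    exact Finset.prod_eq_zero (Finset.mem_univ j) (if_neg hj)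

theorem Matrix.map_nonsing_inv {n R S : Type*} [Fintype n] [DecidableEq n] [CommRing R] [CommRing S]
    (f : R →+* S) {Z : Matrix n n R} (hZ : IsUnit Z.det) : Z⁻¹.map f = (Z.map f)⁻¹ := by
  refine (Matrix.inv_eq_right_inv ?_).symm
  rw [← Matrix.map_mul, Matrix.mul_nonsing_inv Z hZ, Matrix.map_one f (map_zero f) (map_one f)]

theorem Matrix.transpose_inv_mulVec_single_dotProduct {ι : Type*} [Fintype ι] [DecidableEq ι]
    {Z : Matrix ι ι ℤ} (hZ : IsUnit Z.det) (s : ι → ℤ) (j : ι) :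
    ((Z.map (Int.castRingHom ℝ))ᵀ⁻¹ *ᵥ Pi.single j 1) ⬝ᵥ (fun k => (s k : ℝ)) =
      (Z⁻¹ *ᵥ s) j := by
  rw [← Matrix.transpose_nonsing_inv, Matrix.mulVec_single, ← Matrix.map_nonsing_inv _ hZ]
  simp [Matrix.mulVec, dotProduct]

theorem Matrix.mem_span_transpose_image_iff {K ι : Type*} [Field K] [Fintype ι] [DecidableEq ι]
    {R : Matrix ι ι K} (hR : IsUnit R.det) (S : Set ι) (u : ι → K) :
    u ∈ Submodule.span K (Rᵀ '' S) ↔ ∀ j ∉ S, (R⁻¹ *ᵥ u) j = 0 := by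
  constructor
  · intro hu j hj
    let coord : (ι → K) →ₗ[K] K := LinearMap.proj j ∘ₗ R⁻¹.mulVecLin
    suffices Submodule.span K (Rᵀ '' S) ≤ LinearMap.ker coord from this hu
    rw [Submodule.span_le]
    rintro - ⟨i, hi, rfl⟩
    have hji : j ≠ i := fun h => hj (h ▸ hi)
    change (R⁻¹ * R) j i = 0
    rw [Matrix.nonsing_inv_mul R hR, Matrix.one_apply_ne hji]
  · intro h
    have hu : u = ∑ j, (R⁻¹ *ᵥ u) j • Rᵀ j := by
      conv_lhs => rw [← Matrix.one_mulVec u, ← Matrix.mul_nonsing_inv R hR, ← Matrix.mulVec_mulVec]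
      rw [Matrix.mulVec_eq_sum]
      simp
    rw [hu]
    refine Submodule.sum_mem _ fun j _ => ?_
    by_cases hj : j ∈ S
    · exact Submodule.smul_mem _ _ (Submodule.subset_span ⟨j, hj, rfl⟩)
    · simp [h j hj]

def resonances {ι : Type*} [Fintype ι] (W : ι → ℝ) (m : ℕ) : Set (ι → ℤ) :=
  {s | ∑ k, |s k| ≤ (m : ℤ) ∧ ∑ k, (s k : ℝ) * W k = 0}

theorem span_resonances_le_ker {ι : Type*} [Fintype ι] (W : ι → ℝ) (m : ℕ) :
    Submodule.span ℝ ((fun s k => (s k : ℝ)) '' resonances W m) ≤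
      LinearMap.ker (dotProductBilin ℝ ℝ |>.flip W) := by
  rw [Submodule.span_le]
  rintro - ⟨s, hs, rfl⟩
  exact hs.2

theorem intCast_mem_span_resonances_iff {ι : Type*} [Fintype ι] (W : ι → ℝ) {m : ℕ}
    {s : ι → ℤ} (hs : ∑ k, |s k| ≤ (m : ℤ)) :
    (fun k => (s k : ℝ)) ∈ Submodule.span ℝ ((fun s k => (s k : ℝ)) '' resonances W m) ↔
      ∑ k, (s k : ℝ) * W k = 0 :=
  ⟨fun h => span_resonances_le_ker W m h,
    fun h => Submodule.subset_span ⟨s, ⟨hs, h⟩, rfl⟩⟩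

theorem inv_mulVec_eq_zero_iff_resonant {ι : Type*} [Fintype ι] [DecidableEq ι]
    {Z : Matrix ι ι ℤ} (hZ : IsUnit Z.det) {S : Set ι} {W : ι → ℝ} {m : ℕ}
    (hspan : Submodule.span ℝ ((Z.map (Int.castRingHom ℝ))ᵀ '' S) =
      Submodule.span ℝ ((fun s k => (s k : ℝ)) '' resonances W m))
    {s : ι → ℤ} (hs : ∑ k, |s k| ≤ (m : ℤ)) :
    (∀ j ∉ S, (Z⁻¹ *ᵥ s) j = 0) ↔ ∑ k, (s k : ℝ) * W k = 0 := by
  have hR : IsUnit (Z.map (Int.castRingHom ℝ)).det := by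
    rw [← RingHom.mapMatrix_apply, ← RingHom.map_det]
    exact hZ.map _
  rw [← intCast_mem_span_resonances_iff W hs, ← hspan, Matrix.mem_span_transpose_image_iff hR,
    ← Matrix.map_nonsing_inv _ hZ]
  refine forall₂_congr fun j _ => ?_
  rw [← Int.cast_eq_zero (α := ℝ), ← eq_intCast (Int.castRingHom ℝ), RingHom.map_mulVec]
  rfl

theorem sum_abs_sub_eq {ι : Type*} [Fintype ι] {q l : ι → ℕ} (hql : ∀ k, q k = 0 ∨ l k = 0) :
    ∑ k, |(q k : ℤ) - l k| = ∑ k, q k + ∑ k, l k := by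
  push_cast
  rw [← Finset.sum_add_distrib]
  refine Finset.sum_congr rfl fun k _ => ?_
  rcases hql k with h | h <;> simp [h]

open Complex in
theorem rotate_monomial (a : ℝ) (z : ℂ) (p q l : ℕ) :
    ((‖exp (I * a) * z‖ : ℝ) : ℂ) ^ (2 * p) * (exp (I * a) * z) ^ q *
        (starRingEnd ℂ (exp (I * a) * z)) ^ l =
      exp (I * a * ((q : ℂ) - l)) *
        (((‖z‖ : ℝ) : ℂ) ^ (2 * p) * z ^ q * (starRingEnd ℂ z) ^ l) := by
  have hnorm : ‖exp (I * a) * z‖ = ‖z‖ := by simp [norm_exp]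
  have hconj : starRingEnd ℂ (exp (I * a)) = exp (-(I * a)) := by
    rw [← exp_conj]; simp
  have hphase : exp (I * a * ((q : ℂ) - l)) = exp (q * (I * a)) * exp (l * -(I * a)) := by
    rw [← exp_add]; ring_nf
  rw [hnorm, map_mul, hconj, mul_pow, mul_pow, ← exp_nat_mul, ← exp_nat_mul, hphase]
  ring

open Complex in
theorem prod_rotate_monomial {ι : Type*} [Fintype ι] (α : ι → ℝ) (v : ι → ℂ) (p q l : ι → ℕ) :
    ∏ k, ((‖exp (I * α k) * v k‖ : ℝ) : ℂ) ^ (2 * p k) * (exp (I * α k) * v k) ^ q k *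
        (starRingEnd ℂ (exp (I * α k) * v k)) ^ l k =
      exp (I * ((∑ k, α k * ((q k : ℝ) - l k) : ℝ) : ℂ)) *
        ∏ k, ((‖v k‖ : ℝ) : ℂ) ^ (2 * p k) * v k ^ q k * (starRingEnd ℂ (v k)) ^ l k := by
  push_cast
  simp_rw [rotate_monomial, Finset.prod_mul_distrib, Finset.mul_sum, ← mul_assoc, exp_sum]

theorem statement11_general (n m : ℕ) (W : Fin n → ℝ)
    (A : Set (Fin n → ℤ))
    (hA : A = {s : Fin n → ℤ | (∑ k, |s k|) ≤ (m : ℤ) ∧ (∑ k, (s k : ℝ) * W k) = 0})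
    (AR : Submodule ℝ (Fin n → ℝ))
    (hAR : AR = Submodule.span ℝ ((fun (s : Fin n → ℤ) (k : Fin n) => (s k : ℝ)) '' A))
    (r : ℕ)
    (ζ : Fin n → Fin n → ℤ)
    (hspan : Submodule.span ℝ
        ((fun (j : Fin n) (k : Fin n) => (ζ j k : ℝ)) '' {j : Fin n | (j : ℕ) < r}) = AR)
    (hdet : (Matrix.of fun i j : Fin n => ζ j i).det = 1 ∨
        (Matrix.of fun i j : Fin n => ζ j i).det = -1)
    (Rmat : Matrix (Fin n) (Fin n) ℝ)
    (hRmat : Rmat = Matrix.of fun i j : Fin n => (ζ j i : ℝ))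
    (η : Fin n → Fin n → ℝ)
    (hη : ∀ j : Fin n, η j = Rmat.transpose⁻¹.mulVec (Pi.single j 1))
    (p q l : Fin n → ℕ)
    (hsupp : ∀ k : Fin n, q k = 0 ∨ l k = 0)
    (hdeg : (∑ k, q k) + (∑ k, l k) ≤ m)
    (M : (Fin n → ℂ) → ℂ)
    (hM : ∀ v : Fin n → ℂ, M v = ∏ k,
        (((‖v k‖ : ℝ) : ℂ)) ^ (2 * p k) * (v k) ^ (q k) *
          (starRingEnd ℂ (v k)) ^ (l k))
    (Ψ : (Fin n → ℝ) → (Fin n → ℂ) → (Fin n → ℂ))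
    (hΨ : ∀ (α : Fin n → ℝ) (v : Fin n → ℂ) (k : Fin n),
        Ψ α v k = Complex.exp (Complex.I * Complex.ofReal (α k)) * v k) :
    ∀ v : Fin n → ℂ,
      (((2 * Real.pi) ^ (Fintype.card {j : Fin n // r ≤ (j : ℕ)}))⁻¹ : ℝ) •
          (∫ θ : {j : Fin n // r ≤ (j : ℕ)} → ℝ in
              Set.univ.pi (fun _ => Set.Icc (0:ℝ) (2 * Real.pi)),
            M (Ψ (fun k => ∑ j : {j : Fin n // r ≤ (j : ℕ)}, θ j * η (j : Fin n) k) v))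
        = if (∑ k, ((q k : ℝ) - (l k : ℝ)) * W k) = 0 then M v else 0 := by
  intro v
  subst hA hAR
  set Z : Matrix (Fin n) (Fin n) ℤ := Matrix.of fun i j => ζ j i
  have hRZ : Rmat = Z.map (Int.castRingHom ℝ) := hRmat
  have hZ : IsUnit Z.det := by rcases hdet with h | h <;> simp [h]
  set s : Fin n → ℤ := fun k => q k - l k
  have hηs : ∀ j, ∑ k, η j k * s k = (Z⁻¹ *ᵥ s) j := fun j => by
    rw [hη, hRZ]; exact Matrix.transpose_inv_mulVec_single_dotProduct hZ s j
  have hres : (∀ j : {j : Fin n // r ≤ (j : ℕ)}, (Z⁻¹ *ᵥ s) j = 0) ↔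
      ∑ k, ((q k : ℝ) - (l k : ℝ)) * W k = 0 := by
    have hs : ∑ k, |s k| ≤ (m : ℤ) := by rw [sum_abs_sub_eq hsupp]; exact_mod_cast hdeg
    simpa [s] using inv_mulVec_eq_zero_iff_resonant hZ (S := {j | (j : ℕ) < r})
      (by rw [← hRZ, hRmat]; exact hspan) hs
  have hrot : ∀ θ : {j : Fin n // r ≤ (j : ℕ)} → ℝ,
      M (Ψ (fun k => ∑ j : {j : Fin n // r ≤ (j : ℕ)}, θ j * η (j : Fin n) k) v) =
        Complex.exp (Complex.I * ((∑ j : {j : Fin n // r ≤ (j : ℕ)}, (Z⁻¹ *ᵥ s) j * θ j : ℝ) : ℂ)) *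
          M v := by
    intro θ
    have hphase : ∑ k, (∑ j, θ j * η j k) * ((q k : ℝ) - l k) =
        ∑ j : {j : Fin n // r ≤ (j : ℕ)}, (Z⁻¹ *ᵥ s) j * θ j := calc
      _ = ∑ j, θ j * ∑ k, η j k * s k := by
        push_cast [s]
        exact (Matrix.dotProduct_mulVec θ (Matrix.of fun j k => η (j : Fin n) k) _).symm
      _ = _ := by simp_rw [hηs, mul_comm]
    simp_rw [hM, hΨ, prod_rotate_monomial, hphase]
  simp_rw [hrot]
  rw [integral_mul_const, setIntegral_cube_exp_I_mul_sum]
  simp only [hres]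
  split_ifs <;> simp [Complex.real_smul, Real.pi_ne_zero]

/-- For multi-indices `p, q, l ∈ ℕⁿ` with disjoint supports of `q` and `l` and
`|q| + |l| ≤ m`, and the monomial `M(v) = Π_k |v_k|^{2p_k} v_k^{q_k} (conj v_k)^{l_k}`, the average
of `M(Ψ_{Σθ_jη^j} v)` over the cube `[0,2π]^{n−r}` (normalised by `(2π)^{-(n−r)}`) equals `M(v)`
if `(q−l)·W = 0` and equals `0` if `(q−l)·W ≠ 0`. -/
theorem statement11 (n m : ℕ) (W : Fin n → ℝ)
    (A : Set (Fin n → ℤ))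
    (hA : A = {s : Fin n → ℤ | (∑ k, |s k|) ≤ (m : ℤ) ∧ (∑ k, (s k : ℝ) * W k) = 0})
    (AR : Submodule ℝ (Fin n → ℝ))
    (hAR : AR = Submodule.span ℝ ((fun (s : Fin n → ℤ) (k : Fin n) => (s k : ℝ)) '' A))
    (r : ℕ) (hr : r = Module.finrank ℝ AR)
    (ζ : Fin n → Fin n → ℤ)
    (hspan : Submodule.span ℝ
        ((fun (j : Fin n) (k : Fin n) => (ζ j k : ℝ)) '' {j : Fin n | (j : ℕ) < r}) = AR)
    (hdet : (Matrix.of fun i j : Fin n => ζ j i).det = 1 ∨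
        (Matrix.of fun i j : Fin n => ζ j i).det = -1)
    (Rmat : Matrix (Fin n) (Fin n) ℝ)
    (hRmat : Rmat = Matrix.of fun i j : Fin n => (ζ j i : ℝ))
    (η : Fin n → Fin n → ℝ)
    (hη : ∀ j : Fin n, η j = Rmat.transpose⁻¹.mulVec (Pi.single j 1))
    (p q l : Fin n → ℕ)
    (hsupp : ∀ k : Fin n, q k = 0 ∨ l k = 0)
    (hdeg : (∑ k, q k) + (∑ k, l k) ≤ m)
    (M : (Fin n → ℂ) → ℂ)
    (hM : ∀ v : Fin n → ℂ, M v = ∏ k,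
        (((‖v k‖ : ℝ) : ℂ)) ^ (2 * p k) * (v k) ^ (q k) *
          (starRingEnd ℂ (v k)) ^ (l k))
    (Ψ : (Fin n → ℝ) → (Fin n → ℂ) → (Fin n → ℂ))
    (hΨ : ∀ (α : Fin n → ℝ) (v : Fin n → ℂ) (k : Fin n),
        Ψ α v k = Complex.exp (Complex.I * Complex.ofReal (α k)) * v k) :
    ∀ v : Fin n → ℂ,
      (((2 * Real.pi) ^ (Fintype.card {j : Fin n // r ≤ (j : ℕ)}))⁻¹ : ℝ) •
          (∫ θ : {j : Fin n // r ≤ (j : ℕ)} → ℝ in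
              Set.univ.pi (fun _ => Set.Icc (0:ℝ) (2 * Real.pi)),
            M (Ψ (fun k => ∑ j : {j : Fin n // r ≤ (j : ℕ)}, θ j * η (j : Fin n) k) v))
        = if (∑ k, ((q k : ℝ) - (l k : ℝ)) * W k) = 0 then M v else 0 :=
  statement11_general n m W A hA AR hAR r ζ hspan hdet Rmat hRmat η hη p q l hsupp hdeg M hM Ψ hΨ
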